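/- The map sending an alternating, 132-avoiding permutation w of length 2n+1 to w' = (w_1 − 1)(w_2 − 1)···(w_{2n} − 1) (deleting the last entry, which equals 1, and decrementing the rest) is a bijection from A_{2n+1}(132) to A_{2n}(132); hence a_{2n}(132) = a_{2n+1}(132). -/

import Mathlib

open Equiv

/-- The word `w` contains the pattern `p`: some subsequence of `w` is
order-isomorphic to `p`. -/
def Contains {α β : Type*} [LT α] [LT β] {n k : ℕ} (w : Fin n → α) (p : Fin k → β) : Prop :=
  ∃ f : Fin k → Fin n, StrictMono f ∧ ∀ i j : Fin k, p i < p j ↔ w (f i) < w (f j)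

/-- The pattern 132 (written with 0-indexed values as (0,2,1)). -/
def pat132 : Fin 3 → ℕ := ![0, 2, 1]

/-- `w` avoids the pattern 132. -/
def Avoids132 {n : ℕ} (w : Equiv.Perm (Fin n)) : Prop :=
  ¬ Contains (fun i => w i) pat132

/-- Pattern containment between permutations. -/
def ContainsP {n k : ℕ} (w : Equiv.Perm (Fin n)) (p : Equiv.Perm (Fin k)) : Prop :=
  Contains (fun i => w i) (fun i => p i)

/-- `w` is (up-down) alternating: `w 0 < w 1 > w 2 < w 3 > ⋯` (0-indexed). -/
def Alternating {m : ℕ} (w : Equiv.Perm (Fin m)) : Prop :=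
  ∀ i : ℕ, ∀ h : i + 1 < m,
    (i % 2 = 0 → w ⟨i, by omega⟩ < w ⟨i + 1, h⟩) ∧
    (i % 2 = 1 → w ⟨i + 1, h⟩ < w ⟨i, by omega⟩)

/-- The even-indexed (in 1-indexed terms: `w₂, w₄, …, w₂ₙ`) entries of `w`
are order-isomorphic to `u`. -/
def OrderIsoEven {n : ℕ} (w : Equiv.Perm (Fin (2 * n + 1))) (u : Equiv.Perm (Fin n)) : Prop :=
  ∀ i j : Fin n, u i < u j ↔
    w ⟨2 * (i : ℕ) + 1, by have := i.isLt; omega⟩ < w ⟨2 * (j : ℕ) + 1, by have := j.isLt; omega⟩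

/-!
The minimum of an alternating 132-avoiding permutation `w` of odd length is its last entry: at an
odd position it would lie below its left neighbour, and at an even position `k` other than the
last the entries at `k, k + 1, k + 2` would form a 132. Conversely, appending a new minimum to a
permutation of even length keeps it alternating (the new final step is a descent, as required at
an odd index) and keeps it 132-avoiding (a final minimum cannot play the role of the `2`). So
`w ↦ w'` is inverse to appending a minimum, and both are bijections between the two classes.
-/

section Contains

variable {α β γ : Type*} [LT α] [LT β] {n k : ℕ}

theorem Contains.of_comp {m : ℕ} {w : Fin n → α} {p : Fin k → β} {e : Fin m → Fin n}
    (he : StrictMono e) (h : Contains (w ∘ e) p) : Contains w p := by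
  obtain ⟨f, hf, hfp⟩ := h
  exact ⟨e ∘ f, he.comp hf, hfp⟩

theorem contains_congr [LT γ] {w : Fin n → α} {v : Fin n → γ} {p : Fin k → β}
    (h : ∀ i j, w i < w j ↔ v i < v j) : Contains w p ↔ Contains v p := by
  simp only [Contains, h]

theorem contains_comp_castSucc_iff {w : Fin (n + 1) → α} {p : Fin (k + 1) → β}
    (hw : ∀ i, ¬ w i < w (Fin.last n)) (hp : ∃ j, p j < p (Fin.last k)) :
    Contains (w ∘ Fin.castSucc) p ↔ Contains w p := by
  refine ⟨fun h => h.of_comp Fin.strictMono_castSucc, ?_⟩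
  rintro ⟨f, hf, hfp⟩
  obtain ⟨j, hj⟩ := hp
  have hlast : f (Fin.last k) ≠ Fin.last n := fun he => hw (f j) (he ▸ (hfp j _).1 hj)
  have hne (t : Fin (k + 1)) : f t ≠ Fin.last n :=
    ((hf.monotone (Fin.le_last t)).trans_lt (Fin.lt_last_iff_ne_last.2 hlast)).ne
  refine ⟨fun t => (f t).castPred (hne t), fun a b hab => ?_, fun i j => ?_⟩
  · exact Fin.castPred_lt_castPred_iff.2 (hf hab)
  · simp [hfp]

end Contains

theorem contains_pat132_of_lt {α : Type*} [LinearOrder α] {n : ℕ} {w : Fin n → α}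
    {i j k : Fin n} (hij : i < j) (hjk : j < k) (hik : w i < w k) (hkj : w k < w j) :
    Contains w pat132 := by
  have hmono : StrictMono ![i, j, k] := by
    simp [Fin.strictMono_iff_lt_succ, Fin.forall_fin_succ, hij, hjk]
  refine ⟨![i, j, k], hmono, fun a b => ?_⟩
  fin_cases a <;> fin_cases b <;> simp [pat132, hik, hkj, hik.trans hkj, hik.le.not_gt,
    hkj.le.not_gt, (hik.trans hkj).le.not_gt]

theorem Equiv.Perm.eq_of_apply_castSucc_eq {m : ℕ} {σ τ : Perm (Fin (m + 1))}
    (h : ∀ i : Fin m, σ i.castSucc = τ i.castSucc) : σ = τ := by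
  have hlast : σ (Fin.last m) = τ (Fin.last m) := by
    obtain ⟨x, hx⟩ := σ.surjective (τ (Fin.last m))
    induction x using Fin.lastCases with
    | last => exact hx
    | cast i => exact absurd (τ.injective (h i ▸ hx)) (Fin.castSucc_ne_last i)
  ext1 x
  induction x using Fin.lastCases with
  | last => exact hlast
  | cast i => exact h i

/-- `snocZero w = (w₁ + 1) ⋯ (wₘ + 1) 0`, the inverse of the paper's map `w ↦ w'`. -/
def snocZero {m : ℕ} (w : Perm (Fin m)) : Perm (Fin (m + 1)) :=
  (finSuccEquivLast.trans w.optionCongr).trans (finSuccEquiv m).symm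

section snocZero

variable {m : ℕ} (w : Perm (Fin m))

@[simp]
theorem snocZero_castSucc (i : Fin m) : snocZero w i.castSucc = (w i).succ := by
  simp [snocZero, finSuccEquivLast_castSucc]

@[simp]
theorem snocZero_last : snocZero w (Fin.last m) = 0 := by
  simp [snocZero, finSuccEquivLast_last]

theorem snocZero_mk {i : ℕ} (hi : i < m) (hi' : i < m + 1) :
    snocZero w ⟨i, hi'⟩ = (w ⟨i, hi⟩).succ :=
  snocZero_castSucc w ⟨i, hi⟩

theorem snocZero_injective : Function.Injective (snocZero (m := m)) := by
  intro w v h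
  ext1 i
  simpa using congr($h i.castSucc)

theorem exists_snocZero_eq {v : Perm (Fin (m + 1))} (hv : v (Fin.last m) = 0) :
    ∃ w, snocZero w = v := by
  set σ : Perm (Option (Fin m)) := (finSuccEquivLast.symm.trans v).trans (finSuccEquiv m)
  have hσ : σ none = none := by simp [σ, hv]
  refine ⟨removeNone σ, ?_⟩
  have : (removeNone σ).optionCongr = σ := by
    rw [map_equiv_removeNone, hσ, swap_self, Perm.one_def.symm, one_mul]
  ext1 x
  simp [snocZero, this, σ]

theorem eq_snocZero_iff {v : Perm (Fin (m + 1))} :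
    v = snocZero w ↔ ∀ i : Fin m, (w i : ℕ) + 1 = v i.castSucc := by
  refine ⟨by rintro rfl i; simp, fun h => Equiv.Perm.eq_of_apply_castSucc_eq fun i => ?_⟩
  ext
  simp [← h i]

theorem alternating_snocZero_iff (hm : Even m) : Alternating (snocZero w) ↔ Alternating w := by
  constructor
  · intro h i hi
    have := h i (by omega)
    rwa [snocZero_mk w hi, snocZero_mk w (by omega), Fin.succ_lt_succ_iff,
      Fin.succ_lt_succ_iff] at this
  · intro h i hi
    rcases Nat.lt_or_ge (i + 1) m with hi' | hi'
    · rw [snocZero_mk w hi', snocZero_mk w (by omega), Fin.succ_lt_succ_iff,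
        Fin.succ_lt_succ_iff]
      exact h i hi'
    · -- the only new condition is the final descent `wₘ + 1 > 0`, at the odd index `m - 1`
      have hodd : i % 2 = 1 := by obtain ⟨j, hj⟩ := hm; omega
      have hlast : (⟨i + 1, hi⟩ : Fin (m + 1)) = Fin.last m := Fin.ext (by simp; omega)
      refine ⟨by omega, fun _ => ?_⟩
      rw [hlast, snocZero_last, snocZero_mk w (by omega)]
      exact Fin.succ_pos _

theorem avoids132_snocZero_iff : Avoids132 (snocZero w) ↔ Avoids132 w := by
  have hmin (i : Fin (m + 1)) : ¬ snocZero w i < snocZero w (Fin.last m) := by simp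
  have hpat : ∃ j, pat132 j < pat132 (Fin.last 2) := ⟨0, by decide⟩
  rw [Avoids132, Avoids132, ← contains_comp_castSucc_iff hmin hpat,
    contains_congr (v := fun i => w i) (by simp)]

end snocZero

theorem Alternating.apply_last_eq_zero {m : ℕ} (hm : Even m) {w : Perm (Fin (m + 1))}
    (halt : Alternating w) (havoid : Avoids132 w) : w (Fin.last m) = 0 := by
  obtain ⟨⟨k, hk⟩, hwk⟩ := w.surjective 0
  by_contra hne
  have hkm : k < m :=
    lt_of_le_of_ne (Nat.lt_succ_iff.1 hk) fun h => hne (by subst h; exact hwk)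
  rcases Nat.even_or_odd k with ⟨j, rfl⟩ | ⟨j, rfl⟩
  · have hk2 : j + j + 2 < m + 1 := by obtain ⟨l, hl⟩ := hm; omega
    have h01 := (halt (j + j) (by omega)).1 (by omega)
    have h21 := (halt (j + j + 1) hk2).2 (by omega)
    have h02 : w ⟨j + j, hk⟩ < w ⟨j + j + 1 + 1, hk2⟩ := by
      rw [hwk, Fin.pos_iff_ne_zero, ← hwk]
      exact w.injective.ne (by rw [Ne, Fin.mk.injEq]; omega)
    exact havoid (contains_pat132_of_lt (Fin.mk_lt_mk.2 (by omega)) (Fin.mk_lt_mk.2 (by omega))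
      h02 h21)
  · have h := (halt (2 * j) hk).1 (by omega)
    rw [hwk] at h
    exact Fin.not_lt_zero _ h

/-- deleting the final entry (which is the minimum) of
`w ∈ A_{2n+1}(132)` and decrementing gives a bijection onto `A_{2n}(132)`;
hence `a_{2n}(132) = a_{2n+1}(132)`. -/
theorem stmt18 (n : ℕ) :
    (∀ w : Equiv.Perm (Fin (2 * n + 1)), Alternating w → Avoids132 w →
      ∃! w' : Equiv.Perm (Fin (2 * n)),
        (Alternating w' ∧ Avoids132 w') ∧
          ∀ i : Fin (2 * n), (w' i : ℕ) + 1 = (w i.castSucc : ℕ)) ∧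
    (∀ w' : Equiv.Perm (Fin (2 * n)), Alternating w' → Avoids132 w' →
      ∃! w : Equiv.Perm (Fin (2 * n + 1)),
        (Alternating w ∧ Avoids132 w) ∧
          ∀ i : Fin (2 * n), (w' i : ℕ) + 1 = (w i.castSucc : ℕ)) ∧
    Nat.card {w : Equiv.Perm (Fin (2 * n)) // Alternating w ∧ Avoids132 w} =
      Nat.card {w : Equiv.Perm (Fin (2 * n + 1)) //
        Alternating w ∧ Avoids132 w} := by
  have heven : Even (2 * n) := even_two_mul n
  have hsnoc (w' : Perm (Fin (2 * n))) :
      Alternating (snocZero w') ∧ Avoids132 (snocZero w') ↔ Alternating w' ∧ Avoids132 w' :=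
    and_congr (alternating_snocZero_iff w' heven) (avoids132_snocZero_iff w')
  have hsurj (w : Perm (Fin (2 * n + 1))) (ha : Alternating w) (hv : Avoids132 w) :
      ∃ w', snocZero w' = w :=
    exists_snocZero_eq (ha.apply_last_eq_zero heven hv)
  refine ⟨fun w ha hv => ?_, fun w' ha hv => ?_, ?_⟩
  · obtain ⟨w', rfl⟩ := hsurj w ha hv
    exact ⟨w', ⟨(hsnoc w').1 ⟨ha, hv⟩, (eq_snocZero_iff w').1 rfl⟩,
      fun y hy => snocZero_injective ((eq_snocZero_iff y).2 hy.2).symm⟩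
  · exact ⟨snocZero w', ⟨(hsnoc w').2 ⟨ha, hv⟩, (eq_snocZero_iff w').1 rfl⟩,
      fun y hy => (eq_snocZero_iff w').2 hy.2⟩
  · refine Nat.card_congr (Equiv.ofBijective (fun w' => ⟨snocZero w'.1, (hsnoc _).2 w'.2⟩)
      ⟨fun w' v' h => Subtype.ext (snocZero_injective (congrArg Subtype.val h)), fun w => ?_⟩)
    obtain ⟨w', hw'⟩ := hsurj w.1 w.2.1 w.2.2
    exact ⟨⟨w', (hsnoc w').1 (hw' ▸ w.2)⟩, Subtype.ext hw'⟩
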